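/- arXiv:1305.5046 — 8 statements merged into one kernel-verified Lean document; each statement's English description precedes it below -/
import Mathlib

section
/- (Property 2, non-over-swapping) For the NPSD revision protocol, the total proportion of flow swapping off any route never exceeds one: for every route k ∈ K, 0 ≤ Σ_{p ∈ K} ρ k p ≤ 1. -/
open Finset

-- The candidate set `R k` of routes in the same OD pair as `k` with strictly lower cost.
open Classical in
noncomputable def Rset {W K : Type*} [Fintype K] (od : K → W) (C : K → ℝ) (k : K) :
    Finset K :=
  Finset.univ.filter (fun p => od p = od k ∧ C p < C k)

-- The NPSD revision protocol.
open Classical in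
noncomputable def rho {W K : Type*} [Fintype K] (od : K → W) (C : K → ℝ) (θ : W → ℝ)
    (k p : K) : ℝ :=
  if od p = od k ∧ (Rset od C k).Nonempty then
    max 0 ((1 - Real.exp (-θ (od k) * (C k - C p))) / (Rset od C k).card)
  else 0

/-- One discrete NPSD step for a given cost vector `C`. -/
noncomputable def npsdStep {W K : Type*} [Fintype K] (od : K → W) (C : K → ℝ) (θ : W → ℝ)
    (f : K → ℝ) (k : K) : ℝ :=
  f k + (∑ p, f p * rho od C θ p k) - f k * ∑ p, rho od C θ k p

theorem npsd_non_over_swapping {W K : Type*} [Fintype W] [Fintype K]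
    [Nonempty W] [Nonempty K] (od : K → W) (C : K → ℝ) (θ : W → ℝ)
    (hθ : ∀ w, 0 < θ w) :
    ∀ k : K, 0 ≤ (∑ p, rho od C θ k p) ∧ (∑ p, rho od C θ k p) ≤ 1 := by
  classical
  intro k
  have hnonneg : ∀ p, 0 ≤ rho od C θ k p := by
    intro p
    unfold rho
    split
    · exact le_max_left _ _
    · exact le_rfl
  constructor
  · exact Finset.sum_nonneg fun p _ => hnonneg p
  · set S := Rset od C k with hS
    by_cases hne : S.Nonempty
    · have hcard : (0 : ℝ) < S.card := by
        exact_mod_cast Finset.card_pos.mpr hne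
      have hbound : ∀ p ∈ Finset.univ,
          rho od C θ k p ≤ if p ∈ S then (1 : ℝ) / S.card else 0 := by
        intro p _
        by_cases hpS : p ∈ S
        · simp only [hpS, if_pos]
          unfold rho
          split
          · apply max_le
            · positivity
            · gcongr
              linarith [Real.exp_pos (-θ (od k) * (C k - C p))]
          · positivity
        · simp only [hpS, if_neg, not_false_iff]
          -- rho is 0 here: either od p ≠ od k, or C p ≥ C k so the numerator ≤ 0
          unfold rho
          split
          · rename_i h
            apply max_le le_rfl
            apply div_nonpos_of_nonpos_of_nonneg
            · have hC : C k ≤ C p := by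
                by_contra hlt
                push_neg at hlt
                exact hpS (by simp [hS, Rset, h.1, hlt])
              have : 0 ≤ -θ (od k) * (C k - C p) := by
                have := (hθ (od k)).le
                nlinarith
              linarith [Real.one_le_exp this]
            · exact_mod_cast Nat.zero_le _
          · exact le_rfl
      calc ∑ p, rho od C θ k p ≤ ∑ p, if p ∈ S then (1 : ℝ) / S.card else 0 :=
            Finset.sum_le_sum hbound
        _ = S.card * ((1 : ℝ) / S.card) := by
            rw [Finset.sum_ite_mem, Finset.univ_inter, Finset.sum_const, nsmul_eq_mul]
        _ = 1 := by field_simp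
    · have : ∀ p, rho od C θ k p = 0 := by
        intro p
        unfold rho
        rw [if_neg]
        rintro ⟨-, h⟩
        exact hne h
      simp [this]
end

section
/- (Nonnegativity preservation under one NPSD step) If the flow vector f : K → ℝ satisfies f k ≥ 0 for all k ∈ K, then the flow vector f′ obtained from f by one discrete NPSD step also satisfies f′ k ≥ 0 for all k ∈ K. -/
open Finset

theorem npsd_nonneg_preservation {W K : Type*} [Fintype W] [Fintype K]
    [Nonempty W] [Nonempty K] (od : K → W) (C : K → ℝ) (θ : W → ℝ)
    (hθ : ∀ w, 0 < θ w) (f : K → ℝ) (hf : ∀ k, 0 ≤ f k) :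
    ∀ k : K, 0 ≤ npsdStep od C θ f k := by
  classical
  intro k
  have hrho_nonneg : ∀ a b : K, 0 ≤ rho od C θ a b := by
    intro a b
    unfold rho
    split
    · exact le_max_left _ _
    · exact le_rfl
  have hsum_le_one : (∑ p, rho od C θ k p) ≤ 1 := by
    have hbound : ∀ p : K, rho od C θ k p ≤
        (if p ∈ Rset od C k then (1 : ℝ) / (Rset od C k).card else 0) := by
      intro p
      unfold rho
      split
      · rename_i h
        obtain ⟨hod, hne⟩ := h
        have hcardpos : (0 : ℝ) < (Rset od C k).card := by
          exact_mod_cast Finset.card_pos.mpr hne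
        by_cases hp : p ∈ Rset od C k
        · simp only [hp, if_true]
          apply max_le
          · positivity
          · have hnum : 1 - Real.exp (-θ (od k) * (C k - C p)) ≤ 1 := by
              have := Real.exp_nonneg (-θ (od k) * (C k - C p)); linarith
            gcongr
        · simp only [hp, if_false]
          have hcp : ¬ C p < C k := by
            intro hlt
            exact hp (by simp [Rset, hod, hlt])
          have hle : C k - C p ≤ 0 := by linarith [not_lt.mp hcp]
          have : (0:ℝ) ≤ -θ (od k) * (C k - C p) := by
            have := (hθ (od k)).le
            nlinarith
          have hexp : (1:ℝ) ≤ Real.exp (-θ (od k) * (C k - C p)) :=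
            Real.one_le_exp this
          have : (1 - Real.exp (-θ (od k) * (C k - C p))) / (Rset od C k).card ≤ 0 := by
            apply div_nonpos_of_nonpos_of_nonneg
            · linarith
            · positivity
          exact max_le le_rfl this
      · split <;> positivity
    calc (∑ p, rho od C θ k p)
        ≤ ∑ p, (if p ∈ Rset od C k then (1 : ℝ) / (Rset od C k).card else 0) :=
          Finset.sum_le_sum (fun p _ => hbound p)
      _ = (Rset od C k).card * ((1:ℝ) / (Rset od C k).card) := by
          rw [Finset.sum_ite_mem, Finset.univ_inter, Finset.sum_const, nsmul_eq_mul]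
      _ ≤ 1 := by
          rcases Nat.eq_zero_or_pos (Rset od C k).card with h | h
          · simp [h]
          · have : (0:ℝ) < (Rset od C k).card := by exact_mod_cast h
            rw [mul_one_div, div_self (ne_of_gt this)]
  have h1 : 0 ≤ ∑ p, f p * rho od C θ p k :=
    Finset.sum_nonneg fun p _ => mul_nonneg (hf p) (hrho_nonneg p k)
  have h2 : f k * ∑ p, rho od C θ k p ≤ f k := by
    calc f k * ∑ p, rho od C θ k p ≤ f k * 1 :=
          mul_le_mul_of_nonneg_left hsum_le_one (hf k)
      _ = f k := mul_one _
  unfold npsdStep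
  linarith
end

section
/- (Property 3, solution invariance of day-to-day NPSD) Let d : W → ℝ be the travel demands and suppose the initial flow vector f⁰ : K → ℝ is feasible, i.e., f⁰ k ≥ 0 for all k and Σ_{k ∈ K, od k = w} f⁰ k = d w for every w ∈ W. Then for every n ∈ ℕ the n-th iterate Tⁿ f⁰ of the day-to-day NPSD map T is also feasible: (Tⁿ f⁰) k ≥ 0 for all k and Σ_{k ∈ K, od k = w} (Tⁿ f⁰) k = d w for every w. -/
open Finset

/-- The day-to-day NPSD map: costs are recomputed from the current flows via `c`. -/
noncomputable def npsdT {W K : Type*} [Fintype K] (od : K → W)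
    (c : (K → ℝ) → (K → ℝ)) (θ : W → ℝ) (f : K → ℝ) : K → ℝ :=
  npsdStep od (c f) θ f

lemma rho_nonneg {W K : Type*} [Fintype K] (od : K → W) (C : K → ℝ) (θ : W → ℝ) (k p : K) :
    0 ≤ rho od C θ k p := by
  unfold rho
  split
  · exact le_max_left _ _
  · exact le_rfl

lemma rho_eq_zero {W K : Type*} [Fintype K] (od : K → W) (C : K → ℝ) (θ : W → ℝ) {k p : K}
    (h : od p ≠ od k) : rho od C θ k p = 0 := by
  unfold rho
  rw [if_neg]
  tauto

open Classical in
lemma rho_le {W K : Type*} [Fintype K] (od : K → W) (C : K → ℝ) (θ : W → ℝ)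
    (hθ : ∀ w, 0 < θ w) (k p : K) :
    rho od C θ k p ≤ if p ∈ Rset od C k then (1 : ℝ) / (Rset od C k).card else 0 := by
  by_cases hp : p ∈ Rset od C k
  · have hmem := hp
    simp only [Rset, Finset.mem_filter, Finset.mem_univ, true_and] at hmem
    have hcard : (0 : ℝ) < (Rset od C k).card := by
      exact_mod_cast Finset.card_pos.mpr ⟨p, hp⟩
    rw [if_pos hp]
    unfold rho
    rw [if_pos ⟨hmem.1, ⟨p, hp⟩⟩]
    apply max_le
    · positivity
    · have hexp := Real.exp_pos (-θ (od k) * (C k - C p))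
      gcongr
      linarith
  · rw [if_neg hp]
    unfold rho
    split
    · rename_i hcond
      have hnc : ¬ C p < C k := by
        intro hc
        exact hp (by simp [Rset, hcond.1, hc])
      have h1 : (0:ℝ) ≤ -θ (od k) * (C k - C p) := by
        have := hθ (od k)
        nlinarith [not_lt.mp hnc]
      have h2 : (1:ℝ) ≤ Real.exp (-θ (od k) * (C k - C p)) := by
        calc (1:ℝ) = Real.exp 0 := by simp
        _ ≤ _ := Real.exp_le_exp.mpr h1
      have h3 : (1 - Real.exp (-θ (od k) * (C k - C p))) / (Rset od C k).card ≤ 0 := by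
        apply div_nonpos_of_nonpos_of_nonneg
        · linarith
        · positivity
      exact max_le le_rfl h3
    · exact le_rfl

lemma sum_rho_le_one {W K : Type*} [Fintype K] (od : K → W) (C : K → ℝ) (θ : W → ℝ)
    (hθ : ∀ w, 0 < θ w) (k : K) :
    ∑ p, rho od C θ k p ≤ 1 := by
  classical
  calc ∑ p, rho od C θ k p
      ≤ ∑ p, (if p ∈ Rset od C k then (1 : ℝ) / (Rset od C k).card else 0) :=
        Finset.sum_le_sum (fun p _ => rho_le od C θ hθ k p)
    _ = ∑ p ∈ Rset od C k, (1 : ℝ) / (Rset od C k).card := by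
        rw [Finset.sum_ite_mem]
        congr 1
        exact Finset.univ_inter _
    _ = (Rset od C k).card * ((1:ℝ) / (Rset od C k).card) := by
        rw [Finset.sum_const, nsmul_eq_mul]
    _ ≤ 1 := by
        rcases Nat.eq_zero_or_pos (Rset od C k).card with h | h
        · simp [h]
        · have : ((Rset od C k).card : ℝ) ≠ 0 := by exact_mod_cast h.ne'
          rw [mul_one_div, div_self this]

lemma npsdStep_nonneg {W K : Type*} [Fintype K] (od : K → W) (C : K → ℝ) (θ : W → ℝ)
    (hθ : ∀ w, 0 < θ w) (f : K → ℝ) (hf : ∀ k, 0 ≤ f k) (k : K) :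
    0 ≤ npsdStep od C θ f k := by
  unfold npsdStep
  have h1 : f k * ∑ p, rho od C θ k p ≤ f k * 1 :=
    mul_le_mul_of_nonneg_left (sum_rho_le_one od C θ hθ k) (hf k)
  have h2 : 0 ≤ ∑ p, f p * rho od C θ p k :=
    Finset.sum_nonneg (fun p _ => mul_nonneg (hf p) (rho_nonneg od C θ p k))
  linarith

lemma npsdStep_sum {W K : Type*} [Fintype K] [DecidableEq W] (od : K → W) (C : K → ℝ)
    (θ : W → ℝ) (f : K → ℝ) (w : W) :
    ∑ k ∈ Finset.univ.filter (fun k => od k = w), npsdStep od C θ f k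
      = ∑ k ∈ Finset.univ.filter (fun k => od k = w), f k := by
  classical
  unfold npsdStep
  rw [Finset.sum_sub_distrib, Finset.sum_add_distrib]
  have key : ∀ p : K,
      ∑ k ∈ Finset.univ.filter (fun k => od k = w), f p * rho od C θ p k
        = if od p = w then ∑ k, f p * rho od C θ p k else 0 := by
    intro p
    by_cases hp : od p = w
    · rw [if_pos hp]
      apply Finset.sum_subset (Finset.filter_subset _ _)
      intro k _ hk
      have hk' : od k ≠ od p := by
        simp only [Finset.mem_filter, Finset.mem_univ, true_and] at hk
        rw [hp]; exact hk
      rw [rho_eq_zero od C θ hk', mul_zero]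
    · rw [if_neg hp]
      apply Finset.sum_eq_zero
      intro k hk
      simp only [Finset.mem_filter, Finset.mem_univ, true_and] at hk
      have : od k ≠ od p := by rw [hk]; exact fun h => hp h.symm
      rw [rho_eq_zero od C θ this, mul_zero]
  have hA : ∑ k ∈ Finset.univ.filter (fun k => od k = w), ∑ p, f p * rho od C θ p k
      = ∑ k ∈ Finset.univ.filter (fun k => od k = w), f k * ∑ p, rho od C θ k p := by
    rw [Finset.sum_comm]
    simp only [key]
    rw [← Finset.sum_filter]
    apply Finset.sum_congr rfl
    intro p _
    rw [Finset.mul_sum]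
  rw [hA]
  ring

theorem npsd_solution_invariance {W K : Type*} [Fintype W] [Fintype K]
    [Nonempty W] [Nonempty K] [DecidableEq W] (od : K → W)
    (c : (K → ℝ) → (K → ℝ)) (θ : W → ℝ) (hθ : ∀ w, 0 < θ w)
    (d : W → ℝ) (f0 : K → ℝ) (h0 : ∀ k, 0 ≤ f0 k)
    (hd : ∀ w, ∑ k ∈ Finset.univ.filter (fun k => od k = w), f0 k = d w) :
    ∀ n : ℕ, (∀ k, 0 ≤ (npsdT od c θ)^[n] f0 k) ∧
      (∀ w, ∑ k ∈ Finset.univ.filter (fun k => od k = w), (npsdT od c θ)^[n] f0 k = d w) := by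
  intro n
  induction n with
  | zero => exact ⟨h0, hd⟩
  | succ n ih =>
    obtain ⟨hpos, hsum⟩ := ih
    rw [Function.iterate_succ_apply']
    set f := (npsdT od c θ)^[n] f0 with hf
    constructor
    · intro k
      exact npsdStep_nonneg od (c f) θ hθ f hpos k
    · intro w
      rw [show (npsdT od c θ) f = npsdStep od (c f) θ f from rfl]
      rw [npsdStep_sum od (c f) θ f w]
      exact hsum w
end

section
/- (Theorem 2, discrete NPSD is a rational behavior adjustment process) If the flow vector f : K → ℝ satisfies f k ≥ 0 for all k, then the aggregate travel cost evaluated at the current costs does not increase under one discrete NPSD step: Σ_{k ∈ K} C k · (f′ k − f k) ≤ 0. -/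
open Finset

theorem npsd_is_RBAP {W K : Type*} [Fintype W] [Fintype K]
    [Nonempty W] [Nonempty K] (od : K → W) (C : K → ℝ) (θ : W → ℝ)
    (hθ : ∀ w, 0 < θ w) (f : K → ℝ) (hf : ∀ k, 0 ≤ f k) :
    ∑ k, C k * (npsdStep od C θ f k - f k) ≤ 0 := by
  have hrho_nonneg : ∀ k p, 0 ≤ rho od C θ k p := by
    intro k p
    unfold rho
    split
    · exact le_max_left _ _
    · exact le_refl 0
  have hrho_zero : ∀ k p, C k ≤ C p → rho od C θ k p = 0 := by
    intro k p hCp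
    unfold rho
    split
    · rename_i h
      have h1 : (1 : ℝ) ≤ Real.exp (-θ (od k) * (C k - C p)) := by
        rw [show (1:ℝ) = Real.exp 0 by simp]
        apply Real.exp_le_exp.mpr
        have := (hθ (od k)).le
        nlinarith [sub_nonpos.mpr hCp]
      have h2 : (1 - Real.exp (-θ (od k) * (C k - C p))) / (Rset od C k).card ≤ 0 :=
        div_nonpos_of_nonpos_of_nonneg (by linarith) (by positivity)
      exact max_eq_left h2
    · rfl
  have key : ∑ k, C k * (npsdStep od C θ f k - f k)
      = ∑ k, ∑ p, f k * rho od C θ k p * (C p - C k) := by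
    unfold npsdStep
    have h1 : ∑ k, C k * ((f k + (∑ p, f p * rho od C θ p k)
        - f k * ∑ p, rho od C θ k p) - f k)
        = ∑ k, ∑ p, C k * (f p * rho od C θ p k)
          - ∑ k, ∑ p, C k * (f k * rho od C θ k p) := by
      rw [← Finset.sum_sub_distrib]
      refine Finset.sum_congr rfl fun k _ => ?_
      have e1 : C k * (∑ p, f p * rho od C θ p k) = ∑ p, C k * (f p * rho od C θ p k) :=
        Finset.mul_sum _ _ _
      have e2 : C k * (f k * ∑ p, rho od C θ k p) = ∑ p, C k * (f k * rho od C θ k p) := by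
        simp [Finset.mul_sum]
      rw [← e1, ← e2]
      ring
    rw [h1, Finset.sum_comm (f := fun k p => C k * (f p * rho od C θ p k))]
    rw [← Finset.sum_sub_distrib]
    congr 1; ext k
    rw [← Finset.sum_sub_distrib]
    congr 1; ext p
    ring
  rw [key]
  apply Finset.sum_nonpos
  intro k _
  apply Finset.sum_nonpos
  intro p _
  rcases le_or_gt (C k) (C p) with h | h
  · rw [hrho_zero k p h]; simp
  · apply mul_nonpos_of_nonneg_of_nonpos
    · exact mul_nonneg (hf k) (hrho_nonneg k p)
    · linarith
end

section
/- (Theorem 1, sufficiency) If the flow vector f : K → ℝ satisfies f k ≥ 0 for all k and f is stationary under one discrete NPSD step (f′ k = f k for all k ∈ K), then f is a Wardrop user equilibrium with respect to C. -/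
open Finset

theorem npsd_stationary_implies_wardrop {W K : Type*} [Fintype W] [Fintype K]
    [Nonempty W] [Nonempty K] (od : K → W) (C : K → ℝ) (θ : W → ℝ)
    (hθ : ∀ w, 0 < θ w) (f : K → ℝ) (hf : ∀ k, 0 ≤ f k)
    (hstat : ∀ k, npsdStep od C θ f k = f k) :
    ∀ k p : K, od p = od k → 0 < f k → C k ≤ C p := by
  classical
  have rho_nonneg : ∀ a b : K, 0 ≤ rho od C θ a b := by
    intro a b
    unfold rho
    split
    · exact le_max_left _ _
    · exact le_refl 0
  intro k p hodp hfk
  by_contra hCP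
  push_neg at hCP
  obtain ⟨q, hqmem, hqmax⟩ := Finset.exists_max_image
    (Finset.univ.filter fun r => od r = od k ∧ 0 < f r) C
    ⟨k, by simp [hfk]⟩
  simp only [Finset.mem_filter, Finset.mem_univ, true_and] at hqmem
  obtain ⟨hodq, hfq⟩ := hqmem
  have hCkq : C k ≤ C q := hqmax k (by simp [hfk])
  have hCpq : C p < C q := lt_of_lt_of_le hCP hCkq
  have hodpq : od p = od q := hodp.trans hodq.symm
  have hRq : (Rset od C q).Nonempty :=
    ⟨p, by simp [Rset, hodpq, hCpq]⟩
  -- inflow to q is zero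
  have hin : (∑ r, f r * rho od C θ r q) = 0 := by
    apply Finset.sum_eq_zero
    intro r _
    rcases eq_or_lt_of_le (hf r) with h | hfr
    · rw [← h, zero_mul]
    · have : rho od C θ r q = 0 := by
        unfold rho
        split
        · rename_i hcond
          obtain ⟨hodqr, hRr⟩ := hcond
          have hCrq : C r ≤ C q := hqmax r (by simp [hodqr ▸ hodq, hfr])
          have h1 : 1 ≤ Real.exp (-θ (od r) * (C r - C q)) := by
            rw [← Real.exp_zero]
            apply Real.exp_le_exp.mpr
            have : 0 ≤ θ (od r) * (C q - C r) :=
              mul_nonneg (hθ (od r)).le (by linarith)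
            nlinarith
          apply max_eq_left
          apply div_nonpos_of_nonpos_of_nonneg
          · linarith
          · positivity
        · rfl
      rw [this, mul_zero]
  -- outflow from q is positive
  have hout : 0 < ∑ r, rho od C θ q r := by
    have hpos : 0 < rho od C θ q p := by
      unfold rho
      rw [if_pos ⟨hodpq.symm ▸ rfl, hRq⟩]
      have hcard : (0:ℝ) < (Rset od C q).card := by
        exact_mod_cast Finset.card_pos.mpr hRq
      have hexp : Real.exp (-θ (od q) * (C q - C p)) < 1 := by
        rw [← Real.exp_zero]
        apply Real.exp_lt_exp.mpr
        have : 0 < θ (od q) * (C q - C p) :=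
          mul_pos (hθ (od q)) (by linarith)
        linarith
      have : 0 < (1 - Real.exp (-θ (od q) * (C q - C p))) / (Rset od C q).card :=
        div_pos (by linarith) hcard
      exact lt_max_of_lt_right this
    calc (0:ℝ) < rho od C θ q p := hpos
      _ ≤ ∑ r, rho od C θ q r :=
        Finset.single_le_sum (fun r _ => rho_nonneg q r) (Finset.mem_univ p)
  have := hstat q
  unfold npsdStep at this
  rw [hin] at this
  have hzero : f q * ∑ r, rho od C θ q r = 0 := by linarith
  have := mul_pos hfq hout
  linarith
end

section
/- (Theorem 1, necessity) If the flow vector f : K → ℝ satisfies f k ≥ 0 for all k and f is a Wardrop user equilibrium with respect to C, then f is stationary under one discrete NPSD step: f′ k = f k for all k ∈ K. -/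
open Finset

theorem npsd_wardrop_implies_stationary {W K : Type*} [Fintype W] [Fintype K]
    [Nonempty W] [Nonempty K] (od : K → W) (C : K → ℝ) (θ : W → ℝ)
    (hθ : ∀ w, 0 < θ w) (f : K → ℝ) (hf : ∀ k, 0 ≤ f k)
    (hue : ∀ k p : K, od p = od k → 0 < f k → C k ≤ C p) :
    ∀ k, npsdStep od C θ f k = f k := by
  have hR : ∀ q, 0 < f q → ¬ (Rset od C q).Nonempty := by
    rintro q hq ⟨r, hr⟩
    simp only [Rset, Finset.mem_filter] at hr
    exact absurd (hue q r hr.2.1 hq) (not_le.mpr hr.2.2)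
  have hzero : ∀ q p, 0 < f q → rho od C θ q p = 0 := by
    intro q p hq
    simp [rho, hR q hq]
  intro k
  unfold npsdStep
  have h1 : (∑ p, f p * rho od C θ p k) = 0 := by
    apply Finset.sum_eq_zero
    intro p _
    rcases eq_or_lt_of_le (hf p) with h | h
    · rw [← h, zero_mul]
    · rw [hzero p k h, mul_zero]
  have h2 : f k * ∑ p, rho od C θ k p = 0 := by
    rcases eq_or_lt_of_le (hf k) with h | h
    · rw [← h, zero_mul]
    · rw [Finset.sum_eq_zero (fun p _ => hzero k p h), mul_zero]
  rw [h1, h2]; ring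
end

section
/- (Theorem 3, characterization of the zero-dissipation set Z) Suppose the flow vector f : K → ℝ satisfies f k ≥ 0 for all k. Then Σ_{k ∈ K} Σ_{p ∈ K} (C k − C p) · f p · ρ p k = 0 if and only if f is a Wardrop user equilibrium with respect to C. -/
open Finset

theorem npsd_zero_dissipation_iff_wardrop {W K : Type*} [Fintype W] [Fintype K]
    [Nonempty W] [Nonempty K] (od : K → W) (C : K → ℝ) (θ : W → ℝ)
    (hθ : ∀ w, 0 < θ w) (f : K → ℝ) (hf : ∀ k, 0 ≤ f k) :
    (∑ k, ∑ p, (C k - C p) * f p * rho od C θ p k = 0)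
      ↔ (∀ k p : K, od p = od k → 0 < f k → C k ≤ C p) := by
  have rho_nonneg : ∀ k p, 0 ≤ rho od C θ k p := by
    intro k p
    unfold rho
    split
    · exact le_max_left _ _
    · exact le_rfl
  -- rho k p = 0 when C p is not cheaper than C k
  have rho_zero : ∀ k p, C k ≤ C p → rho od C θ k p = 0 := by
    intro k p hle
    unfold rho
    split
    · rename_i h
      have h1 : (1 : ℝ) ≤ Real.exp (-θ (od k) * (C k - C p)) := by
        rw [← Real.exp_zero]
        apply Real.exp_le_exp.mpr
        have : C k - C p ≤ 0 := by linarith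
        nlinarith [(hθ (od k)).le]
      have h2 : (1 - Real.exp (-θ (od k) * (C k - C p))) / (Rset od C k).card ≤ 0 := by
        apply div_nonpos_of_nonpos_of_nonneg
        · linarith
        · positivity
      exact max_eq_left h2
    · rfl
  have rho_pos : ∀ k p, od p = od k → C p < C k → 0 < rho od C θ k p := by
    intro k p hod hlt
    have hmem : p ∈ Rset od C k := by
      simp [Rset, hod, hlt]
    have hne : (Rset od C k).Nonempty := ⟨p, hmem⟩
    have hcard : 0 < ((Rset od C k).card : ℝ) := by
      exact_mod_cast Finset.card_pos.mpr hne
    unfold rho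
    rw [if_pos ⟨hod, hne⟩]
    have h1 : Real.exp (-θ (od k) * (C k - C p)) < 1 := by
      rw [← Real.exp_zero]
      apply Real.exp_lt_exp.mpr
      nlinarith [hθ (od k)]
    have : 0 < (1 - Real.exp (-θ (od k) * (C k - C p))) / (Rset od C k).card :=
      div_pos (by linarith) hcard
    exact lt_max_of_lt_right this
  have term_nonpos : ∀ k p : K, (C k - C p) * f p * rho od C θ p k ≤ 0 := by
    intro k p
    rcases le_or_gt (C p) (C k) with h | h
    · rw [rho_zero p k h, mul_zero]
    · have : C k - C p ≤ 0 := by linarith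
      have := mul_nonpos_of_nonpos_of_nonneg
        (mul_nonpos_of_nonpos_of_nonneg this (hf p)) (rho_nonneg p k)
      exact this
  constructor
  · intro hsum k p hod hfk
    by_contra hCpk'
    push_neg at hCpk'
    have hCpk : C p < C k := hCpk'
    -- the (p, k) term is strictly negative, contradiction
    have hterm : (C p - C k) * f k * rho od C θ k p < 0 := by
      have hr : 0 < rho od C θ k p := rho_pos k p hod hCpk
      have : C p - C k < 0 := by linarith
      exact mul_neg_of_neg_of_pos (mul_neg_of_neg_of_pos this hfk) hr
    have houter : ∀ q ∈ Finset.univ,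
        (∑ r, (C q - C r) * f r * rho od C θ r q) ≤ 0 := fun q _ =>
      Finset.sum_nonpos (fun r _ => term_nonpos q r)
    have hall := (Finset.sum_eq_zero_iff_of_nonpos houter).mp hsum
    have hq := hall p (Finset.mem_univ p)
    have hinner := (Finset.sum_eq_zero_iff_of_nonpos
      (fun r _ => term_nonpos p r)).mp hq k (Finset.mem_univ k)
    linarith
  · intro hW
    apply Finset.sum_eq_zero
    intro k _
    apply Finset.sum_eq_zero
    intro p _
    rcases le_or_gt (C p) (C k) with h | h
    · rw [rho_zero p k h, mul_zero]
    · -- C k < C p; show f p = 0 or rho = 0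
      rcases eq_or_ne (od k) (od p) with hod | hod
      · rcases (hf p).lt_or_eq with hfp | hfp
        · exact absurd (hW p k hod hfp) (not_le.mpr h)
        · rw [← hfp, mul_zero, zero_mul]
      · have : rho od C θ p k = 0 := by
          unfold rho
          rw [if_neg]
          intro ⟨h1, _⟩
          exact hod h1
        rw [this, mul_zero]
end

section
/- (Equation (14) implies equal costs on used routes) Suppose the flow vector f : K → ℝ satisfies f k ≥ 0 for all k and (C k − C p) · f p · ρ p k = 0 for all routes k, p ∈ K. Then any two used routes in the same OD pair have equal cost (if od p = od k, f p > 0 and f k > 0, then C p = C k), and every used route costs no more than any route of the same OD pair (if od p = od k and f p > 0, then C p ≤ C k). -/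
open Finset

theorem npsd_pointwise_vanishing_implies_equal_costs {W K : Type*} [Fintype W] [Fintype K]
    [Nonempty W] [Nonempty K] (od : K → W) (C : K → ℝ) (θ : W → ℝ)
    (hθ : ∀ w, 0 < θ w) (f : K → ℝ) (hf : ∀ k, 0 ≤ f k)
    (hvan : ∀ k p : K, (C k - C p) * f p * rho od C θ p k = 0) :
    (∀ k p : K, od p = od k → 0 < f p → 0 < f k → C p = C k) ∧
      (∀ k p : K, od p = od k → 0 < f p → C p ≤ C k) := by

  have key : ∀ k p : K, od p = od k → 0 < f p → C p ≤ C k := by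
    intro k p hod hfp
    by_contra h
    push_neg at h
    have hkmem : k ∈ Rset od C p := by
      simp only [Rset, Finset.mem_filter, Finset.mem_univ, true_and]
      exact ⟨hod.symm, h⟩
    have hne : (Rset od C p).Nonempty := ⟨k, hkmem⟩
    have hrho : 0 < rho od C θ p k := by
      rw [rho, if_pos ⟨hod.symm, hne⟩]
      have h1 : (0:ℝ) < 1 - Real.exp (-θ (od p) * (C p - C k)) := by
        have : Real.exp (-θ (od p) * (C p - C k)) < 1 := by
          rw [Real.exp_lt_one_iff]
          have := hθ (od p)
          nlinarith
        linarith
      have h2 : (0:ℝ) < (Rset od C p).card := by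
        exact_mod_cast Finset.card_pos.mpr hne
      exact lt_max_of_lt_right (div_pos h1 h2)
    have := hvan k p
    have hne2 : (C k - C p) * f p * rho od C θ p k ≠ 0 := by
      apply mul_ne_zero (mul_ne_zero _ hfp.ne') hrho.ne'
      linarith
    exact hne2 this
  refine ⟨fun k p hod hfp hfk => le_antisymm (key k p hod hfp) (key p k hod.symm hfk), key⟩
end
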